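/- arXiv:math/0501090 — 2 statements merged into one kernel-verified Lean document; each statement's English description precedes it below -/
import Mathlib

section
/- Let G be a group and A : G → SU(2) an irreducible homomorphism. Suppose there exist two distinct nontrivial homomorphisms χ, η : G → {±1} and elements u, v ∈ SU(2) such that χ·A = u·A·u⁻¹ and η·A = v·A·v⁻¹ (pointwise). Then, after conjugation in SU(2), the image of A is contained in the quaternion group Q₈ = {±1, ±i, ±j, ±k}. -/
open Quaternion

/-- The group `SU(2)`, identified with the group of unit quaternions. -/
noncomputable abbrev SU2 : Type := Metric.sphere (0 : ℍ[ℝ]) 1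

/-- The quaternion `i`. -/
noncomputable def qi : ℍ[ℝ] := ⟨0,1,0,0⟩
/-- The quaternion `j`. -/
noncomputable def qj : ℍ[ℝ] := ⟨0,0,1,0⟩
/-- The quaternion `k`. -/
noncomputable def qk : ℍ[ℝ] := ⟨0,0,0,1⟩

lemma mem_SU2_of_normSq {q : ℍ[ℝ]} (h : Quaternion.normSq q = 1) :
    q ∈ Metric.sphere (0 : ℍ[ℝ]) 1 := by
  rw [mem_sphere_zero_iff_norm, norm_eq_sqrt_real_inner, Quaternion.inner_self, h]
  simp

/-- `i` as a unit quaternion. -/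
noncomputable def iSU : SU2 := ⟨qi, mem_SU2_of_normSq (by rw [Quaternion.normSq_def']; simp [qi])⟩
/-- `j` as a unit quaternion. -/
noncomputable def jSU : SU2 := ⟨qj, mem_SU2_of_normSq (by rw [Quaternion.normSq_def']; simp [qj])⟩
/-- `k` as a unit quaternion. -/
noncomputable def kSU : SU2 := ⟨qk, mem_SU2_of_normSq (by rw [Quaternion.normSq_def']; simp [qk])⟩
/-- `-1` as a unit quaternion. -/
noncomputable def negOne : SU2 := ⟨-1, by simp⟩

/-- The circle subgroup `S¹` of unit complex numbers `a + b·i` inside the unit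
quaternions. -/
noncomputable def circleSet : Set SU2 :=
  {u | (u : ℍ[ℝ]).imJ = 0 ∧ (u : ℍ[ℝ]).imK = 0}

/-- The binary dihedral group `S¹ ∪ j·S¹` inside the unit quaternions. -/
noncomputable def binDihSet : Set SU2 :=
  circleSet ∪ (fun w => jSU * w) '' circleSet

/-- A homomorphism to `SU(2)` is irreducible if its image is not contained in any
conjugate of the circle `S¹`. -/
noncomputable def IsIrredRep {G : Type*} [Group G] (A : G →* SU2) : Prop :=
  ¬ ∃ g : SU2, ∀ x : G, g * A x * g⁻¹ ∈ circleSet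

/-- The embedding of `{±1}` into the center of `SU(2)`. -/
noncomputable def sgn (s : ℤˣ) : SU2 := if s = 1 then 1 else negOne


/-- The quaternion group `Q₈ = {±1, ±i, ±j, ±k}` inside the unit quaternions. -/
noncomputable def Q8Set : Set SU2 :=
  {(1 : SU2), negOne, iSU, negOne * iSU, jSU, negOne * jSU, kSU, negOne * kSU}

/-
If `u` conjugates `A` to `χ·A`, then `u²` centralises the image of `A`. By irreducibility that
centraliser is `{±1}`: the normalised imaginary part of any other centralising element is a pure
unit quaternion, and conjugating it to `i` would move the image of `A` into the circle. Since
`χ ≠ 1`, `u` is not central, so `u² = -1`; likewise `v² = -1` and, as `uv` conjugates `A` to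
`χη·A` with `χη ≠ 1`, `(uv)² = -1`. Hence `u` and `v` are anticommuting pure unit quaternions and
can be conjugated simultaneously to `i` and `j`. Afterwards every `A g` commutes or anticommutes
with both `i` and `j`, which leaves only `±1, ±i, ±j, ±k`.
-/

namespace SU2

theorem ext_iff {x y : SU2} : x = y ↔ (x : ℍ[ℝ]) = y := Subtype.ext_iff

theorem normSq_eq_one (x : SU2) : normSq (x : ℍ[ℝ]) = 1 := by
  rw [normSq_eq_norm_mul_self, mem_sphere_zero_iff_norm.mp x.2, one_mul]

theorem commute_iff_coe {x y : SU2} : Commute x y ↔ Commute (x : ℍ[ℝ]) y := Subtype.ext_iff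

@[simp] theorem coe_negOne : ((negOne : SU2) : ℍ[ℝ]) = -1 := rfl

theorem commute_negOne (x : SU2) : Commute negOne x :=
  commute_iff_coe.mpr (by simp [Commute, SemiconjBy])

@[simp] theorem negOne_mul_negOne : negOne * negOne = (1 : SU2) := by
  simp [ext_iff]

theorem negOne_ne_one : (negOne : SU2) ≠ 1 := by
  rw [Ne, ext_iff, coe_negOne, Metric.unitSphere.coe_one]
  intro h
  have := congrArg QuaternionAlgebra.re h
  norm_num at this

theorem conj_negOne (w : SU2) : w * negOne * w⁻¹ = negOne := by
  rw [(commute_negOne w).symm.eq, mul_inv_cancel_right]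

theorem mul_self_eq_negOne_of_re_eq_zero {x : SU2} (h : (x : ℍ[ℝ]).re = 0) : x * x = negOne := by
  rw [ext_iff, Metric.unitSphere.coe_mul, coe_negOne, ← sq, sq_eq_neg_normSq.mpr h,
    normSq_eq_one, Quaternion.coe_one]

theorem eq_one_or_eq_negOne_of_im_eq_zero {x : SU2} (h : (x : ℍ[ℝ]).im = 0) :
    x = 1 ∨ x = negOne := by
  have hx : (x : ℍ[ℝ]) = ((x : ℍ[ℝ]).re : ℍ[ℝ]) := by
    conv_lhs => rw [← re_add_im (x : ℍ[ℝ]), h, add_zero]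
  have hre : (x : ℍ[ℝ]).re ^ 2 = 1 := by
    rw [← Quaternion.normSq_coe, ← hx, normSq_eq_one]
  rw [ext_iff, ext_iff, hx, Metric.unitSphere.coe_one, coe_negOne, ← Quaternion.coe_one,
    ← Quaternion.coe_neg, Quaternion.coe_inj, Quaternion.coe_inj]
  exact sq_eq_one_iff.mp hre

theorem eq_one_or_eq_negOne_of_mul_self_eq_one {x : SU2} (h : x * x = 1) :
    x = 1 ∨ x = negOne := by
  rw [ext_iff, Metric.unitSphere.coe_mul, Metric.unitSphere.coe_one] at h
  have h' : ((x : ℍ[ℝ]) - 1) * ((x : ℍ[ℝ]) + 1) = 0 := by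
    rw [sub_mul, mul_add, h]; noncomm_ring
  rcases mul_eq_zero.mp h' with h' | h'
  · exact Or.inl (ext_iff.mpr (sub_eq_zero.mp h'))
  · exact Or.inr (ext_iff.mpr (eq_neg_of_add_eq_zero_left h'))

noncomputable def normalize (q : ℍ[ℝ]) (hq : q ≠ 0) : SU2 :=
  ⟨‖q‖⁻¹ • q, by
    rw [mem_sphere_zero_iff_norm, norm_smul, norm_inv, norm_norm,
      inv_mul_cancel₀ (norm_ne_zero_iff.mpr hq)]⟩

@[simp] theorem coe_normalize (q : ℍ[ℝ]) (hq : q ≠ 0) : (normalize q hq : ℍ[ℝ]) = ‖q‖⁻¹ • q :=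
  rfl

theorem conj_eq_of_mul_eq {w x y : SU2} (h : (w : ℍ[ℝ]) * x = y * w) : w * x * w⁻¹ = y := by
  rw [mul_inv_eq_iff_eq_mul, ext_iff, Metric.unitSphere.coe_mul, Metric.unitSphere.coe_mul, h]

theorem eq_or_eq_negOne_mul_of_coe_eq_smul {x e : SU2} {t : ℝ} (h : (x : ℍ[ℝ]) = t • (e : ℍ[ℝ])) :
    x = e ∨ x = negOne * e := by
  have ht : t ^ 2 = 1 := by
    simpa [normSq_eq_one, Quaternion.normSq_smul] using (congrArg normSq h).symm
  rcases sq_eq_one_iff.mp ht with rfl | rfl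
  · exact Or.inl (ext_iff.mpr (by rw [h, one_smul]))
  · exact Or.inr (ext_iff.mpr (by simp [h]))

theorem anticommute_of_mul_self_eq_negOne {x y : SU2} (hx : x * x = negOne) (hy : y * y = negOne)
    (hxy : x * y * (x * y) = negOne) : x * y = negOne * (y * x) := by
  have hinv : ∀ {z : SU2}, z * z = negOne → z⁻¹ = negOne * z := fun {z} hz =>
    inv_eq_of_mul_eq_one_right <| by
      rw [(commute_negOne z).symm.left_comm, hz, negOne_mul_negOne]
  calc x * y = negOne * (x * y)⁻¹ := eq_mul_inv_of_mul_eq hxy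
    _ = negOne * (negOne * y * (negOne * x)) := by rw [mul_inv_rev, hinv hx, hinv hy]
    _ = negOne * (y * x) := by
      rw [mul_assoc negOne y, (commute_negOne y).symm.left_comm, ← mul_assoc negOne negOne,
        negOne_mul_negOne, one_mul]

/- The conjugator is `1 - xy`, normalised: `(1 - xy) y = x + y = x (1 - xy)`, and `1 - xy`
commutes with everything anticommuting with both `x` and `y`. It vanishes only when `y = -x`,
and then `s` conjugates `y` to `x`. -/
theorem exists_conj_eq_of_mul_self_eq_negOne {x y s : SU2} (hx : x * x = negOne)
    (hy : y * y = negOne) (hsx : s * x = negOne * (x * s)) :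
    ∃ w : SU2, w * y * w⁻¹ = x ∧ (s * y = negOne * (y * s) → Commute w s) := by
  simp only [ext_iff, Metric.unitSphere.coe_mul, coe_negOne, neg_one_mul] at hx hy hsx
  by_cases hxy : (1 : ℍ[ℝ]) - x * y = 0
  · have hyx : (y : ℍ[ℝ]) = -x := by
      calc (y : ℍ[ℝ]) = -(x * x) * y := by rw [hx, neg_neg, one_mul]
        _ = -x := by rw [neg_mul, mul_assoc, ← sub_eq_zero.mp hxy, mul_one]
    refine ⟨s, conj_eq_of_mul_eq ?_, fun _ => Commute.refl s⟩
    rw [hyx, mul_neg, hsx, neg_neg]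
  · refine ⟨normalize _ hxy, conj_eq_of_mul_eq ?_, fun hsy => commute_iff_coe.mpr ?_⟩
    · rw [coe_normalize, smul_mul_assoc, mul_smul_comm]
      congr 1
      rw [sub_mul, mul_sub, mul_assoc, hy, ← mul_assoc, hx]
      noncomm_ring
    · simp only [ext_iff, Metric.unitSphere.coe_mul, coe_negOne, neg_one_mul] at hsy
      rw [coe_normalize]
      refine ((Commute.one_left _).sub_left ?_).smul_left _
      calc (x : ℍ[ℝ]) * y * s = -(x * (s * y)) := by rw [mul_assoc, hsy, mul_neg, neg_neg]
        _ = s * (x * y) := by rw [← mul_assoc, ← neg_mul, ← hsx, mul_assoc]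

end SU2

@[simp] theorem sgn_one : sgn 1 = 1 := if_pos rfl

@[simp] theorem sgn_neg_one : sgn (-1) = negOne := if_neg (by decide)

theorem commute_sgn (s : ℤˣ) (x : SU2) : Commute (sgn s) x := by
  rcases Int.units_eq_one_or s with rfl | rfl
  · simp
  · simpa using SU2.commute_negOne x

theorem sgn_mul_self (s : ℤˣ) : sgn s * sgn s = 1 := by
  rcases Int.units_eq_one_or s with rfl | rfl <;> simp

theorem sgn_mul (s t : ℤˣ) : sgn (s * t) = sgn s * sgn t := by
  rcases Int.units_eq_one_or s with rfl | rfl <;> rcases Int.units_eq_one_or t with rfl | rfl <;>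
    simp

theorem sgn_eq_one_iff {s : ℤˣ} : sgn s = 1 ↔ s = 1 := by
  rcases Int.units_eq_one_or s with rfl | rfl
  · simp
  · simp [SU2.negOne_ne_one]

theorem conj_sgn_mul (s : ℤˣ) (x a : SU2) : x * (sgn s * a) * x⁻¹ = sgn s * (x * a * x⁻¹) := by
  rw [← mul_assoc, ← (commute_sgn s x).eq, mul_assoc, mul_assoc, mul_assoc]

theorem SU2.commute_or_anticommute_of_sgn_mul_eq_conj {s : ℤˣ} {x e : SU2}
    (h : sgn s * x = e * x * e⁻¹) :
    (x : ℍ[ℝ]) * e = e * x ∨ (x : ℍ[ℝ]) * e = -(e * x) := by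
  rw [eq_mul_inv_iff_mul_eq, ext_iff, Metric.unitSphere.coe_mul, Metric.unitSphere.coe_mul,
    Metric.unitSphere.coe_mul] at h
  rcases Int.units_eq_one_or s with rfl | rfl
  · rw [sgn_one, Metric.unitSphere.coe_one, one_mul] at h
    exact Or.inl h
  · rw [sgn_neg_one, coe_negOne, neg_one_mul, neg_mul] at h
    exact Or.inr (neg_eq_iff_eq_neg.mp h)

theorem MonoidHom.mul_ne_one_of_ne {G : Type*} [MulOneClass G] {χ η : G →* ℤˣ} (h : χ ≠ η) :
    χ * η ≠ 1 := fun hχη => h <| MonoidHom.ext fun g => by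
  have := DFunLike.congr_fun hχη g
  rwa [MonoidHom.mul_apply, MonoidHom.one_apply, mul_eq_one_iff_eq_inv, Int.units_inv_eq_self]
    at this

@[simp] theorem qi_re : qi.re = 0 := rfl
@[simp] theorem qi_imI : qi.imI = 1 := rfl
@[simp] theorem qi_imJ : qi.imJ = 0 := rfl
@[simp] theorem qi_imK : qi.imK = 0 := rfl

@[simp] theorem qj_re : qj.re = 0 := rfl
@[simp] theorem qj_imI : qj.imI = 0 := rfl
@[simp] theorem qj_imJ : qj.imJ = 1 := rfl
@[simp] theorem qj_imK : qj.imK = 0 := rfl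

@[simp] theorem qk_re : qk.re = 0 := rfl
@[simp] theorem qk_imI : qk.imI = 0 := rfl
@[simp] theorem qk_imJ : qk.imJ = 0 := rfl
@[simp] theorem qk_imK : qk.imK = 1 := rfl

theorem iSU_mul_iSU : iSU * iSU = negOne := SU2.mul_self_eq_negOne_of_re_eq_zero rfl

theorem jSU_mul_jSU : jSU * jSU = negOne := SU2.mul_self_eq_negOne_of_re_eq_zero rfl

theorem jSU_mul_iSU : jSU * iSU = negOne * (iSU * jSU) := by
  simp [SU2.ext_iff, Quaternion.ext_iff, iSU, jSU]

theorem iSU_mul_jSU : iSU * jSU = negOne * (jSU * iSU) := by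
  simp [SU2.ext_iff, Quaternion.ext_iff, iSU, jSU]

theorem imJ_eq_zero_and_imK_eq_zero_of_commute_qi {x : ℍ[ℝ]} (h : x * qi = qi * x) :
    x.imJ = 0 ∧ x.imK = 0 := by
  obtain ⟨-, -, hJ, hK⟩ := Quaternion.ext_iff.mp h
  simp only [imJ_mul, imK_mul, qi_re, qi_imI, qi_imJ, qi_imK] at hJ hK
  constructor <;> linarith

theorem re_eq_zero_and_imI_eq_zero_of_anticommute_qi {x : ℍ[ℝ]} (h : x * qi = -(qi * x)) :
    x.re = 0 ∧ x.imI = 0 := by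
  obtain ⟨hre, hI, -, -⟩ := Quaternion.ext_iff.mp h
  simp only [re_mul, imI_mul, re_neg, imI_neg, qi_re, qi_imI, qi_imJ, qi_imK] at hre hI
  constructor <;> linarith

theorem imI_eq_zero_and_imK_eq_zero_of_commute_qj {x : ℍ[ℝ]} (h : x * qj = qj * x) :
    x.imI = 0 ∧ x.imK = 0 := by
  obtain ⟨-, hI, -, hK⟩ := Quaternion.ext_iff.mp h
  simp only [imI_mul, imK_mul, qj_re, qj_imI, qj_imJ, qj_imK] at hI hK
  constructor <;> linarith

theorem re_eq_zero_and_imJ_eq_zero_of_anticommute_qj {x : ℍ[ℝ]} (h : x * qj = -(qj * x)) :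
    x.re = 0 ∧ x.imJ = 0 := by
  obtain ⟨hre, -, hJ, -⟩ := Quaternion.ext_iff.mp h
  simp only [re_mul, imJ_mul, re_neg, imJ_neg, qj_re, qj_imI, qj_imJ, qj_imK] at hre hJ
  constructor <;> linarith

theorem mem_circleSet_of_commute_iSU {x : SU2} (h : Commute x iSU) : x ∈ circleSet :=
  imJ_eq_zero_and_imK_eq_zero_of_commute_qi (SU2.commute_iff_coe.mp h)

theorem mem_Q8Set_of_conj {s t : ℤˣ} {x : SU2} (hi : sgn s * x = iSU * x * iSU⁻¹)
    (hj : sgn t * x = jSU * x * jSU⁻¹) : x ∈ Q8Set := by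
  simp only [Q8Set, Set.mem_insert_iff, Set.mem_singleton_iff]
  rcases SU2.commute_or_anticommute_of_sgn_mul_eq_conj hi with hi | hi <;>
    rcases SU2.commute_or_anticommute_of_sgn_mul_eq_conj hj with hj | hj
  · obtain ⟨hJ, hK⟩ := imJ_eq_zero_and_imK_eq_zero_of_commute_qi hi
    obtain ⟨hI, -⟩ := imI_eq_zero_and_imK_eq_zero_of_commute_qj hj
    have : (x : ℍ[ℝ]) = (x : ℍ[ℝ]).re • ((1 : SU2) : ℍ[ℝ]) := by ext <;> simp [hI, hJ, hK]
    rcases SU2.eq_or_eq_negOne_mul_of_coe_eq_smul this with h | h <;> simp [h]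
  · obtain ⟨hJ, hK⟩ := imJ_eq_zero_and_imK_eq_zero_of_commute_qi hi
    obtain ⟨hre, -⟩ := re_eq_zero_and_imJ_eq_zero_of_anticommute_qj hj
    have : (x : ℍ[ℝ]) = (x : ℍ[ℝ]).imI • (iSU : ℍ[ℝ]) := by ext <;> simp [iSU, hre, hJ, hK]
    rcases SU2.eq_or_eq_negOne_mul_of_coe_eq_smul this with h | h <;> simp [h]
  · obtain ⟨hre, hI⟩ := re_eq_zero_and_imI_eq_zero_of_anticommute_qi hi
    obtain ⟨-, hK⟩ := imI_eq_zero_and_imK_eq_zero_of_commute_qj hj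
    have : (x : ℍ[ℝ]) = (x : ℍ[ℝ]).imJ • (jSU : ℍ[ℝ]) := by ext <;> simp [jSU, hre, hI, hK]
    rcases SU2.eq_or_eq_negOne_mul_of_coe_eq_smul this with h | h <;> simp [h]
  · obtain ⟨hre, hI⟩ := re_eq_zero_and_imI_eq_zero_of_anticommute_qi hi
    obtain ⟨-, hJ⟩ := re_eq_zero_and_imJ_eq_zero_of_anticommute_qj hj
    have : (x : ℍ[ℝ]) = (x : ℍ[ℝ]).imK • (kSU : ℍ[ℝ]) := by ext <;> simp [kSU, hre, hI, hJ]
    rcases SU2.eq_or_eq_negOne_mul_of_coe_eq_smul this with h | h <;> simp [h]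

section Representation

variable {G : Type*} [Group G]

theorem IsIrredRep.eq_one_or_eq_negOne_of_commute {A : G →* SU2} (hA : IsIrredRep A) {z : SU2}
    (hz : ∀ g, Commute z (A g)) : z = 1 ∨ z = negOne := by
  by_contra hz1
  have him : (z : ℍ[ℝ]).im ≠ 0 := fun h => hz1 (SU2.eq_one_or_eq_negOne_of_im_eq_zero h)
  set p := SU2.normalize _ him
  have hp : p * p = negOne := SU2.mul_self_eq_negOne_of_re_eq_zero (by simp [p])
  have hpA : ∀ g, Commute p (A g) := fun g => by
    refine SU2.commute_iff_coe.mpr (Commute.smul_left ?_ _)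
    rw [eq_sub_of_add_eq' (re_add_im (z : ℍ[ℝ]))]
    exact (SU2.commute_iff_coe.mp (hz g)).sub_left (Quaternion.coe_commute _ _)
  obtain ⟨w, hw, -⟩ := SU2.exists_conj_eq_of_mul_self_eq_negOne iSU_mul_iSU hp jSU_mul_iSU
  refine hA ⟨w, fun g => mem_circleSet_of_commute_iSU ?_⟩
  have := (hpA g).map (MulAut.conj w)
  rw [MulAut.conj_apply, MulAut.conj_apply, hw] at this
  exact this.symm

def Intertwines (A : G → SU2) (σ : G →* ℤˣ) (x : SU2) : Prop :=
  ∀ g, sgn (σ g) * A g = x * A g * x⁻¹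

namespace Intertwines

variable {A : G → SU2} {σ τ : G →* ℤˣ} {x y : SU2}

theorem mul (hx : Intertwines A σ x) (hy : Intertwines A τ y) : Intertwines A (σ * τ) (x * y) :=
  fun g => calc
    sgn ((σ * τ) g) * A g = sgn (τ g) * (sgn (σ g) * A g) := by
      rw [MonoidHom.mul_apply, mul_comm, sgn_mul, mul_assoc]
    _ = x * (sgn (τ g) * A g) * x⁻¹ := by rw [hx g, conj_sgn_mul]
    _ = x * y * A g * (x * y)⁻¹ := by rw [hy g]; group

theorem commute_mul_self (h : Intertwines A σ x) (g : G) : Commute (x * x) (A g) := by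
  refine mul_inv_eq_iff_eq_mul.mp ?_
  calc x * x * A g * (x * x)⁻¹ = x * (x * A g * x⁻¹) * x⁻¹ := by group
    _ = sgn (σ g) * (sgn (σ g) * A g) := by rw [← h g, conj_sgn_mul, ← h g]
    _ = A g := by rw [← mul_assoc, sgn_mul_self, one_mul]

theorem conj (h : Intertwines A σ x) (w : SU2) :
    Intertwines (fun g => w * A g * w⁻¹) σ (w * x * w⁻¹) := fun g => calc
  sgn (σ g) * (w * A g * w⁻¹) = w * (x * A g * x⁻¹) * w⁻¹ := by rw [← conj_sgn_mul, h g]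
  _ = w * x * w⁻¹ * (w * A g * w⁻¹) * (w * x * w⁻¹)⁻¹ := by group

theorem mul_self_eq_negOne {A : G →* SU2} (hA : IsIrredRep A) (hσ : σ ≠ 1)
    (h : Intertwines A σ x) : x * x = negOne := by
  refine (hA.eq_one_or_eq_negOne_of_commute h.commute_mul_self).resolve_left fun hx => hσ ?_
  have hc : ∀ a, Commute x a := by
    rcases SU2.eq_one_or_eq_negOne_of_mul_self_eq_one hx with rfl | rfl
    exacts [Commute.one_left, SU2.commute_negOne]
  refine MonoidHom.ext fun g => ?_
  have := h g
  rw [(hc (A g)).eq, mul_inv_cancel_right] at this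
  exact sgn_eq_one_iff.mp (mul_eq_right.mp this)

end Intertwines

end Representation

/-- If an irreducible `A : G →* SU(2)` is fixed up to conjugacy by two distinct
nontrivial characters `χ, η : G →* {±1}`, then after conjugation the image of `A` is
contained in the quaternion group `Q₈`. -/
theorem two_twists_give_Q8 {G : Type*} [Group G]
    (A : G →* SU2) (hA : IsIrredRep A)
    (χ η : G →* ℤˣ) (hχ : χ ≠ 1) (hη : η ≠ 1) (hne : χ ≠ η) (u v : SU2)
    (h1 : ∀ g : G, sgn (χ g) * A g = u * A g * u⁻¹)
    (h2 : ∀ g : G, sgn (η g) * A g = v * A g * v⁻¹) :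
    ∃ w : SU2, ∀ g : G, w * A g * w⁻¹ ∈ Q8Set := by
  have hu := Intertwines.mul_self_eq_negOne hA hχ h1
  have hv := Intertwines.mul_self_eq_negOne hA hη h2
  have huv := (Intertwines.mul h1 h2).mul_self_eq_negOne hA (MonoidHom.mul_ne_one_of_ne hne)
  obtain ⟨w₁, hw₁, -⟩ := SU2.exists_conj_eq_of_mul_self_eq_negOne iSU_mul_iSU hu jSU_mul_iSU
  have hv₁ : (w₁ * v * w₁⁻¹) * (w₁ * v * w₁⁻¹) = negOne := by
    rw [conj_mul, hv, SU2.conj_negOne]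
  have hiv₁ : iSU * (w₁ * v * w₁⁻¹) = negOne * ((w₁ * v * w₁⁻¹) * iSU) := by
    rw [← hw₁, conj_mul, conj_mul, SU2.anticommute_of_mul_self_eq_negOne hu hv huv,
      ← conj_mul, SU2.conj_negOne]
  obtain ⟨w₂, hw₂, hw₂i⟩ := SU2.exists_conj_eq_of_mul_self_eq_negOne jSU_mul_jSU hv₁ iSU_mul_jSU
  have hconj : ∀ x, (w₂ * w₁) * x * (w₂ * w₁)⁻¹ = w₂ * (w₁ * x * w₁⁻¹) * w₂⁻¹ := fun x => by group
  refine ⟨w₂ * w₁, fun g => mem_Q8Set_of_conj (s := χ g) (t := η g) ?_ ?_⟩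
  · simpa only [hconj u, hw₁, (hw₂i hiv₁).eq, mul_inv_cancel_right]
      using Intertwines.conj h1 (w₂ * w₁) g
  · simpa only [hconj v, hw₂] using Intertwines.conj h2 (w₂ * w₁) g
end

section
/- Let G be a group whose abelianization is infinite cyclic and whose commutator subgroup is perfect. Then every homomorphism A : G → SU(2) whose image is contained, after conjugation, in the binary dihedral group S¹ ∪ j·S¹ factors through the abelianization of G, and hence has image contained in a conjugate of the circle S¹ (i.e., A is reducible). -/
open Quaternion

/-! The commutator subgroup of the binary dihedral group lies in the abelian circle `S¹`.
Since `[G, G]` is perfect, a homomorphism into the binary dihedral group therefore kills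
`[G, G]`, so it factors through `Gᵃᵇ ≅ ℤ` and its image is cyclic. A generator lies in `S¹`
or in `j·S¹`, and every element of `j·S¹` is conjugate into `S¹`; conjugating the generator
into `S¹` conjugates the whole image into `S¹`. -/

open scoped commutatorElement

section GroupTheory

variable {G H : Type*} [Group G] [Group H]

lemma commutator_le_ker_of_le_comap (f : G →* H) {C : Subgroup H} [IsMulCommutative C]
    (hG : commutator (commutator G) = ⊤) (hf : commutator G ≤ C.comap f) :
    commutator G ≤ f.ker := by
  intro x hx
  have hkill : commutator (commutator G) ≤ (f.comp (commutator G).subtype).ker := by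
    rw [commutator_def (commutator G), Subgroup.commutator_le]
    intro a _ b _
    rw [MonoidHom.mem_ker, map_commutatorElement, commutatorElement_eq_one_iff_mul_comm]
    exact setLike_mul_comm (s := C) (hf a.2) (hf b.2)
  exact hkill (hG ▸ Subgroup.mem_top (⟨x, hx⟩ : commutator G))

lemma exists_forall_mem_zpowers_of_commutator_le_ker [IsCyclic (Abelianization G)]
    (f : G →* H) (hf : commutator G ≤ f.ker) :
    ∃ x₀ : G, ∀ x : G, f x ∈ Subgroup.zpowers (f x₀) := by
  obtain ⟨g, hg⟩ := IsCyclic.exists_generator (α := Abelianization G)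
  obtain ⟨x₀, rfl⟩ := QuotientGroup.mk_surjective g
  refine ⟨x₀, fun x => ?_⟩
  obtain ⟨m, hm⟩ := hg (Abelianization.of x)
  refine ⟨m, ?_⟩
  let B : Abelianization G →* H := QuotientGroup.lift (commutator G) f hf
  change B (Abelianization.of x₀) ^ m = B (Abelianization.of x)
  rw [← map_zpow, ← hm]
  rfl

end GroupTheory

namespace SU2

lemma normSq_coe (u : SU2) : normSq (u : ℍ[ℝ]) = 1 := by
  rw [Quaternion.normSq_eq_norm_mul_self, mem_sphere_zero_iff_norm.mp u.2, one_mul]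

lemma coe_inv (u : SU2) : ((u⁻¹ : SU2) : ℍ[ℝ]) = star (u : ℍ[ℝ]) := by
  rw [Metric.unitSphere.coe_inv, Quaternion.inv_def, normSq_coe, inv_one, one_smul]

end SU2

noncomputable def circleSubgroup : Subgroup SU2 where
  carrier := circleSet
  mul_mem' := by
    rintro a b ⟨ha1, ha2⟩ ⟨hb1, hb2⟩
    constructor <;> simp [Metric.unitSphere.coe_mul, Quaternion.imJ_mul, Quaternion.imK_mul,
      ha1, ha2, hb1, hb2]
  one_mem' := by constructor <;> simp [Metric.unitSphere.coe_one]
  inv_mem' := by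
    rintro a ⟨ha1, ha2⟩
    constructor <;> rw [SU2.coe_inv] <;> simp [ha1, ha2]

@[simp]
lemma mem_circleSubgroup {u : SU2} : u ∈ circleSubgroup ↔ u ∈ circleSet := Iff.rfl

instance : IsMulCommutative circleSubgroup where
  is_comm := ⟨by
    rintro ⟨a, ha1, ha2⟩ ⟨b, hb1, hb2⟩
    refine Subtype.ext (Subtype.ext ?_)
    simp only [Subgroup.coe_mul, Metric.unitSphere.coe_mul]
    ext <;> simp [Quaternion.re_mul, Quaternion.imI_mul, Quaternion.imJ_mul, Quaternion.imK_mul,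
      ha1, ha2, hb1, hb2] <;> ring⟩

lemma mem_circleSet_or_of_mem_binDihSet {u : SU2} (hu : u ∈ binDihSet) :
    u ∈ circleSet ∨ ((u : ℍ[ℝ]).re = 0 ∧ (u : ℍ[ℝ]).imI = 0) := by
  rcases hu with hu | ⟨v, ⟨hv1, hv2⟩, rfl⟩
  · exact Or.inl hu
  · right
    constructor <;> simp [jSU, Metric.unitSphere.coe_mul, Quaternion.re_mul, Quaternion.imI_mul,
      hv1, hv2] <;> simp [qj]

lemma commutatorElement_mem_circleSet {x y : SU2} (hx : x ∈ binDihSet) (hy : y ∈ binDihSet) :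
    ⁅x, y⁆ ∈ circleSet := by
  have hc : ((⁅x, y⁆ : SU2) : ℍ[ℝ]) = (x : ℍ[ℝ]) * y * star (x : ℍ[ℝ]) * star (y : ℍ[ℝ]) := by
    simp only [commutatorElement_def, Metric.unitSphere.coe_mul, SU2.coe_inv]
  change _ ∧ _
  rw [hc]
  obtain ⟨h1, h2⟩ | ⟨h1, h2⟩ := mem_circleSet_or_of_mem_binDihSet hx <;>
    obtain ⟨h3, h4⟩ | ⟨h3, h4⟩ := mem_circleSet_or_of_mem_binDihSet hy <;>
    constructor <;>
    simp only [Quaternion.imJ_mul, Quaternion.imK_mul, Quaternion.re_mul, Quaternion.imI_mul,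
      Quaternion.re_star, Quaternion.imI_star, Quaternion.imJ_star, Quaternion.imK_star,
      h1, h2, h3, h4] <;> ring

lemma commutator_le_comap_circleSubgroup {G : Type*} [Group G] (f : G →* SU2)
    (hf : ∀ g, f g ∈ binDihSet) : commutator G ≤ circleSubgroup.comap f := by
  rw [commutator_def, Subgroup.commutator_le]
  intro g _ h _
  rw [Subgroup.mem_comap, map_commutatorElement]
  exact commutatorElement_mem_circleSet (hf g) (hf h)

/-- `n = (i + v)/√2` bisects `i` and `v`, so conjugation by `n`, the half-turn about its axis,
swaps them. -/
lemma exists_conj_mem_circleSet_of_re_eq_zero {v : SU2} (h1 : (v : ℍ[ℝ]).re = 0)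
    (h2 : (v : ℍ[ℝ]).imI = 0) : ∃ n : SU2, n * v * n⁻¹ ∈ circleSet := by
  set c := (v : ℍ[ℝ]).imJ
  set d := (v : ℍ[ℝ]).imK
  have hcd : c ^ 2 + d ^ 2 = 1 := by
    have := SU2.normSq_coe v
    rw [normSq_def', h1, h2] at this
    linarith
  set s : ℝ := (Real.sqrt 2)⁻¹
  have hs : s ^ 2 = 1 / 2 := by
    rw [inv_pow, Real.sq_sqrt (by norm_num : (0 : ℝ) ≤ 2)]
    norm_num
  set q : ℍ[ℝ] := ⟨0, s, s * c, s * d⟩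
  have hq : q.re = 0 ∧ q.imI = s ∧ q.imJ = s * c ∧ q.imK = s * d := ⟨rfl, rfl, rfl, rfl⟩
  have hn : normSq q = 1 := by
    rw [normSq_def', hq.1, hq.2.1, hq.2.2.1, hq.2.2.2]
    linear_combination 2 * hs + s ^ 2 * hcd
  refine ⟨⟨q, mem_SU2_of_normSq hn⟩, ?_, ?_⟩ <;>
    simp only [Metric.unitSphere.coe_mul, SU2.coe_inv, Quaternion.imJ_mul, Quaternion.imK_mul,
      Quaternion.re_mul, Quaternion.imI_mul, Quaternion.re_star, Quaternion.imI_star,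
      Quaternion.imJ_star, Quaternion.imK_star, h1, h2, hq]
  · linear_combination (s ^ 2 * c) * hcd
  · linear_combination (s ^ 2 * d) * hcd

lemma exists_conj_mem_circleSet_of_mem_binDihSet {u : SU2} (hu : u ∈ binDihSet) :
    ∃ n : SU2, n * u * n⁻¹ ∈ circleSet := by
  rcases mem_circleSet_or_of_mem_binDihSet hu with hu | ⟨h1, h2⟩
  · exact ⟨1, by simpa using hu⟩
  · exact exists_conj_mem_circleSet_of_re_eq_zero h1 h2

/-- If `G` has infinite cyclic abelianization and perfect commutator subgroup, then any
homomorphism `A : G →* SU(2)` whose image lies (after conjugation) in the binary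
dihedral group `S¹ ∪ j·S¹` factors through the abelianization of `G`, and hence has
image in a conjugate of the circle `S¹` (i.e. `A` is reducible). -/
theorem binary_dihedral_rep_reducible {G : Type*} [Group G]
    (h1 : Nonempty (Abelianization G ≃* Multiplicative ℤ))
    (h2 : commutator ↥(commutator G) = ⊤)
    (A : G →* SU2) (w : SU2) (hw : ∀ g : G, w * A g * w⁻¹ ∈ binDihSet) :
    (∃ B : Abelianization G →* SU2, A = B.comp Abelianization.of) ∧
    ∃ g : SU2, ∀ x : G, g * A x * g⁻¹ ∈ circleSet := by
  have hker : commutator G ≤ A.ker := by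
    rw [← MonoidHom.ker_mulEquiv_comp A (MulAut.conj w)]
    exact commutator_le_ker_of_le_comap _ h2 (commutator_le_comap_circleSubgroup _ hw)
  refine ⟨⟨QuotientGroup.lift _ A hker, rfl⟩, ?_⟩
  have : IsCyclic (Abelianization G) := h1.some.isCyclic.mpr inferInstance
  obtain ⟨x₀, hx₀⟩ := exists_forall_mem_zpowers_of_commutator_le_ker A hker
  obtain ⟨n, hn⟩ := exists_conj_mem_circleSet_of_mem_binDihSet (hw x₀)
  have hgen : Subgroup.zpowers (A x₀) ≤
      circleSubgroup.comap (MulAut.conj (n * w)).toMonoidHom := by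
    rw [Subgroup.zpowers_le]
    simpa [mul_assoc] using hn
  exact ⟨n * w, fun x => by simpa [mul_assoc] using hgen (hx₀ x)⟩
end
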